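/- arXiv:2001.05344 — 3 statements merged into one kernel-verified Lean document; each statement's English description precedes it below -/
import Mathlib

section
/- Equivalence of formulations of the causal null (Proposition 1): Suppose in addition that the restriction of θ₀ to 𝒜₀ is continuous. Then the following are equivalent: (1) θ₀(a) = θ₀(a') for all a, a' ∈ 𝒜₀; (2) θ₀(a) = γ₀ for all a ∈ 𝒜₀; (3) Ω₀(a) = 0 for all a ∈ ℝ; (4) (∫ |Ω₀|^p dF₀)^{1/p} = 0 for every p ∈ [1, ∞) and sup_{a ∈ 𝒜₀} |Ω₀(a)| = 0. -/
open MeasureTheory Set Filter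

/-- Topological support of a Borel measure on ℝ. -/
def msupport (F₀ : Measure ℝ) : Set ℝ := {x : ℝ | ∀ U ∈ nhds x, F₀ U ≠ 0}

/-- Cumulative distribution function of `F₀`. -/
noncomputable def cdf0 (F₀ : Measure ℝ) (a : ℝ) : ℝ := (F₀ (Iic a)).toReal

/-- `γ₀ := ∫ θ₀ dF₀`. -/
noncomputable def gamma0 (F₀ : Measure ℝ) (θ₀ : ℝ → ℝ) : ℝ := ∫ u, θ₀ u ∂F₀

/-- `Γ₀(a) := ∫_{(-∞,a]} θ₀ dF₀`. -/
noncomputable def Gamma0 (F₀ : Measure ℝ) (θ₀ : ℝ → ℝ) (a : ℝ) : ℝ := ∫ u in Iic a, θ₀ u ∂F₀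

/-- `Ω₀(a) := Γ₀(a) − γ₀ F₀(a)`. -/
noncomputable def Omega0 (F₀ : Measure ℝ) (θ₀ : ℝ → ℝ) (a : ℝ) : ℝ :=
  Gamma0 F₀ θ₀ a - gamma0 F₀ θ₀ * cdf0 F₀ a

/-! Because the support of a measure on `ℝ` is conull, (1) and (2) both say that `θ₀` is a.e.
constant (the constant being `γ₀`), and by continuity on `𝒜₀` "`θ₀ = γ₀` a.e." is the same as
"`θ₀ = γ₀` on `𝒜₀`". Writing `Ω₀(a) = ∫_{(-∞,a]} (θ₀ - γ₀) dF₀`, the vanishing of `Ω₀` says that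
the finite measures with densities `(θ₀ - γ₀)⁺` and `(θ₀ - γ₀)⁻` agree on half-lines, hence are
equal, i.e. `θ₀ = γ₀` a.e. Finally `Ω₀` is bounded, and it is constant on each gap of `𝒜₀` and
zero to the left of `𝒜₀`, so the supremum condition in (4) already forces `Ω₀ ≡ 0`. -/

open Topology

lemma eq_zero_of_biSup_abs_eq_zero {ι : Type*} {f : ι → ℝ} {s : Set ι} {C : ℝ}
    (hC : ∀ i, |f i| ≤ C) (h : ⨆ i ∈ s, |f i| = 0) : ∀ i ∈ s, f i = 0 := by
  intro i hi
  have hbdd : BddAbove (range fun i => ⨆ _ : i ∈ s, |f i|) :=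
    ⟨max C 0, forall_mem_range.mpr fun j =>
      Real.iSup_le (fun _ => (hC j).trans (le_max_left _ _)) (le_max_right _ _)⟩
  have hle := le_ciSup hbdd i
  rw [ciSup_pos hi, h] at hle
  exact abs_nonpos_iff.mp hle

namespace MeasureTheory.Measure

variable {X : Type*} [TopologicalSpace X] [MeasurableSpace X] {μ : Measure X}

lemma ae_eq_of_eqOn_support [HereditarilyLindelofSpace X] {Y : Type*} {f g : X → Y}
    (h : EqOn f g μ.support) : f =ᵐ[μ] g :=
  mem_of_superset support_mem_ae h

lemma eqOn_support_of_ae_eq [HereditarilyLindelofSpace X] {Y : Type*} [TopologicalSpace Y]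
    [T2Space Y] {f g : X → Y} (hf : ContinuousOn f μ.support) (hg : ContinuousOn g μ.support)
    (hfg : f =ᵐ[μ] g) : EqOn f g μ.support := by
  intro x hx
  by_contra hne
  have hne_near : ∀ᶠ y in 𝓝[μ.support] x, f y ≠ g y :=
    ((hf x hx).prodMk_nhds (hg x hx)).eventually
      ((isOpen_ne_fun continuous_fst continuous_snd).mem_nhds hne)
  obtain ⟨U, hU, hUsub⟩ := mem_nhdsWithin_iff_exists_mem_nhds_inter.mp hne_near
  have hU_null : μ U = 0 := by
    refine measure_mono_null (fun y hy => ?_)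
      (measure_union_null (ae_iff.mp hfg) measure_compl_support)
    exact (em (y ∈ μ.support)).imp (fun hy' => hUsub ⟨hy, hy'⟩) id
  exact ((mem_support_iff_forall x).mp hx U hU).ne' hU_null

end MeasureTheory.Measure

lemma msupport_eq_support (μ : Measure ℝ) : msupport μ = μ.support := by
  ext x
  rw [Measure.mem_support_iff_forall]
  exact forall₂_congr fun U _ => pos_iff_ne_zero.symm

lemma ae_eq_zero_of_forall_setIntegral_Iic_eq_zero {μ : Measure ℝ} [IsFiniteMeasure μ]
    {g : ℝ → ℝ} (hg : Integrable g μ) (h : ∀ a, ∫ x in Iic a, g x ∂μ = 0) : g =ᵐ[μ] 0 := by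
  have := isFiniteMeasure_withDensity_ofReal hg.2
  have hdens :
      μ.withDensity (fun x => .ofReal (g x)) = μ.withDensity (fun x => .ofReal (-g x)) := by
    refine Measure.ext_of_Iic _ _ fun a => ?_
    have hpart := h a
    rw [integral_eq_lintegral_pos_part_sub_lintegral_neg_part hg.integrableOn, sub_eq_zero,
      ENNReal.toReal_eq_toReal_iff' hg.integrableOn.lintegral_lt_top.ne
        hg.fun_neg.integrableOn.lintegral_lt_top.ne] at hpart
    rwa [withDensity_apply _ measurableSet_Iic, withDensity_apply _ measurableSet_Iic]
  rw [withDensity_eq_iff hg.1.aemeasurable.ennreal_ofReal hg.fun_neg.1.aemeasurable.ennreal_ofReal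
    hg.lintegral_lt_top.ne] at hdens
  filter_upwards [hdens] with x hx
  rcases le_total (g x) 0 with hx' | hx'
  · rw [ENNReal.ofReal_of_nonpos hx', eq_comm, ENNReal.ofReal_eq_zero] at hx
    exact le_antisymm hx' (neg_nonpos.mp hx)
  · rw [ENNReal.ofReal_of_nonpos (neg_nonpos.mpr hx'), ENNReal.ofReal_eq_zero] at hx
    exact le_antisymm hx hx'

lemma exists_mem_support_Iic_ae_eq {μ : Measure ℝ} {a : ℝ} (ha : (μ.support ∩ Iic a).Nonempty) :
    ∃ b ∈ μ.support, Iic a =ᵐ[μ] Iic b := by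
  have hbdd : BddAbove (μ.support ∩ Iic a) := ⟨a, fun x hx => hx.2⟩
  obtain ⟨hb, hba⟩ : sSup (μ.support ∩ Iic a) ∈ μ.support ∩ Iic a :=
    (Measure.isClosed_support.inter isClosed_Iic).csSup_mem ha hbdd
  refine ⟨_, hb, ae_eq_set.mpr ⟨?_, ?_⟩⟩
  · rw [Iic_sdiff_Iic]
    refine measure_mono_null ?_ Measure.measure_compl_support
    intro x hx hxs
    exact hx.1.not_ge (le_csSup hbdd ⟨hxs, hx.2⟩)
  · rw [Iic_sdiff_Iic, Ioc_eq_empty (not_lt.mpr hba), measure_empty]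

lemma gamma0_eq_of_ae_eq_const {μ : Measure ℝ} [IsProbabilityMeasure μ] {θ : ℝ → ℝ} {c : ℝ}
    (h : θ =ᵐ[μ] fun _ => c) : gamma0 μ θ = c := by
  rw [gamma0, integral_congr_ae h, integral_const, probReal_univ, one_smul]

section Omega

variable {μ : Measure ℝ} {θ : ℝ → ℝ}

lemma Omega0_congr {a b : ℝ} (h : Iic a =ᵐ[μ] Iic b) : Omega0 μ θ a = Omega0 μ θ b := by
  rw [Omega0, Omega0, Gamma0, Gamma0, cdf0, cdf0, Measure.restrict_congr_set h, measure_congr h]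

lemma Omega0_eq_zero_of_eqOn_support (h : ∀ a ∈ μ.support, Omega0 μ θ a = 0) (a : ℝ) :
    Omega0 μ θ a = 0 := by
  by_cases ha : (μ.support ∩ Iic a).Nonempty
  · obtain ⟨b, hb, hab⟩ := exists_mem_support_Iic_ae_eq ha
    rw [Omega0_congr hab, h b hb]
  · have hnull : μ (Iic a) = 0 :=
      measure_mono_null (fun x hx hxs => ha ⟨x, hxs, hx⟩) Measure.measure_compl_support
    rw [Omega0, Gamma0, cdf0, Measure.restrict_eq_zero.mpr hnull, hnull]
    simp

variable [IsFiniteMeasure μ]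

lemma Omega0_eq_setIntegral_sub (hθ : Integrable θ μ) (a : ℝ) :
    Omega0 μ θ a = ∫ u in Iic a, (θ u - gamma0 μ θ) ∂μ := by
  rw [integral_sub hθ.integrableOn (integrable_const _), setIntegral_const, smul_eq_mul,
    Omega0, Gamma0, cdf0, Measure.real, mul_comm]

lemma Omega0_eq_zero_iff_ae_eq_gamma0 (hθ : Integrable θ μ) :
    (∀ a, Omega0 μ θ a = 0) ↔ θ =ᵐ[μ] fun _ => gamma0 μ θ := by
  simp only [Omega0_eq_setIntegral_sub hθ]
  constructor
  · intro h
    filter_upwards [ae_eq_zero_of_forall_setIntegral_Iic_eq_zero (hθ.sub (integrable_const _)) h]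
      with u hu
    exact sub_eq_zero.mp hu
  · intro h a
    exact integral_eq_zero_of_ae (ae_restrict_of_ae (h.mono fun u hu => sub_eq_zero.mpr hu))

lemma abs_Omega0_le (hθ : Integrable θ μ) (a : ℝ) :
    |Omega0 μ θ a| ≤ ∫ u, |θ u - gamma0 μ θ| ∂μ := by
  rw [Omega0_eq_setIntegral_sub hθ]
  exact (abs_integral_le_integral_abs).trans (setIntegral_le_integral
    (hθ.sub (integrable_const _)).abs (ae_of_all _ fun _ => abs_nonneg _))

end Omega

/-- Proposition 1: equivalence of the formulations of the causal null hypothesis. -/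
theorem causal_null_equivalence
    (F₀ : Measure ℝ) [IsProbabilityMeasure F₀]
    (θ₀ : ℝ → ℝ) (hθm : Measurable θ₀) (hθb : ∃ C : ℝ, ∀ a : ℝ, |θ₀ a| ≤ C)
    (hθc : ContinuousOn θ₀ (msupport F₀)) :
    List.TFAE
      [ ∀ a ∈ msupport F₀, ∀ a' ∈ msupport F₀, θ₀ a = θ₀ a',
        ∀ a ∈ msupport F₀, θ₀ a = gamma0 F₀ θ₀,
        ∀ a : ℝ, Omega0 F₀ θ₀ a = 0,
        (∀ p : ℝ, 1 ≤ p → (∫ a, |Omega0 F₀ θ₀ a| ^ p ∂F₀) ^ (1 / p) = 0) ∧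
          (⨆ a ∈ msupport F₀, |Omega0 F₀ θ₀ a|) = 0 ] := by
  obtain ⟨C, hC⟩ := hθb
  have hθ : Integrable θ₀ F₀ :=
    .of_bound hθm.aestronglyMeasurable C (ae_of_all _ fun a => (Real.norm_eq_abs _).trans_le (hC a))
  rw [msupport_eq_support] at hθc ⊢
  tfae_have 1 → 2 := fun h a ha => by
    obtain ⟨a₀, ha₀⟩ := Measure.nonempty_support (IsProbabilityMeasure.ne_zero F₀)
    rw [h a ha a₀ ha₀, gamma0_eq_of_ae_eq_const
      (Measure.ae_eq_of_eqOn_support fun x hx => h x hx a₀ ha₀)]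
  tfae_have 2 → 1 := fun h a ha a' ha' => (h a ha).trans (h a' ha').symm
  tfae_have 2 ↔ 3 := by
    rw [Omega0_eq_zero_iff_ae_eq_gamma0 hθ]
    exact ⟨Measure.ae_eq_of_eqOn_support,
      Measure.eqOn_support_of_ae_eq hθc continuousOn_const⟩
  tfae_have 3 → 4 := fun h => by
    refine ⟨fun p hp => ?_, by simp [h]⟩
    have hp0 : p ≠ 0 := (zero_lt_one.trans_le hp).ne'
    simp [h, Real.zero_rpow hp0, Real.zero_rpow (inv_ne_zero hp0)]
  tfae_have 4 → 3 := fun h => Omega0_eq_zero_of_eqOn_support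
    (eq_zero_of_biSup_abs_eq_zero (abs_Omega0_le hθ) h.2)
  tfae_finish
end

section
/- Second-order remainder identity for the influence-function construction: For every a₀ ∈ ℝ, every bounded measurable μ : ℝ × 𝒲 → ℝ, and every measurable g : ℝ × 𝒲 → ℝ with g ≥ K₁ > 0 everywhere, E[D_{a₀,μ,g}(Y, A, W)] = Ω₀(a₀) + ∬ [1{a ≤ a₀} − F₀(a₀)] · (μ(a,w) − μ₀(a,w)) · (1 − g₀(a,w)/g(a,w)) dF₀(a) dQ₀(w). -/
open MeasureTheory Set Filter

/-- Indicator `1{a ≤ a₀}`. -/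
noncomputable def indLe (a₀ a : ℝ) : ℝ := if a ≤ a₀ then 1 else 0

/-- `θ_μ(a) := ∫ μ(a,w) dQ₀(w)`. -/
noncomputable def thetaMu {𝒲 : Type*} [MeasurableSpace 𝒲] (Q₀ : Measure 𝒲)
    (μ : ℝ → 𝒲 → ℝ) (a : ℝ) : ℝ := ∫ w, μ a w ∂Q₀

/-- `γ_μ := ∬ μ(a,w) dF₀(a) dQ₀(w)`. -/
noncomputable def gammaMu {𝒲 : Type*} [MeasurableSpace 𝒲] (F₀ : Measure ℝ) (Q₀ : Measure 𝒲)
    (μ : ℝ → 𝒲 → ℝ) : ℝ := ∫ a, ∫ w, μ a w ∂Q₀ ∂F₀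

/-- `Ω_μ(a₀) := ∬ [1{a ≤ a₀} − F₀(a₀)] μ(a,w) dF₀(a) dQ₀(w)`. -/
noncomputable def OmegaMu {𝒲 : Type*} [MeasurableSpace 𝒲] (F₀ : Measure ℝ) (Q₀ : Measure 𝒲)
    (μ : ℝ → 𝒲 → ℝ) (a₀ : ℝ) : ℝ :=
  ∫ a, ∫ w, (indLe a₀ a - cdf0 F₀ a₀) * μ a w ∂Q₀ ∂F₀

/-- The one-step functional `D_{a₀,μ,g}(y,a,w)`. -/
noncomputable def Dfun {𝒲 : Type*} [MeasurableSpace 𝒲] (F₀ : Measure ℝ) (Q₀ : Measure 𝒲)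
    (μ g : ℝ → 𝒲 → ℝ) (a₀ y a : ℝ) (w : 𝒲) : ℝ :=
  (indLe a₀ a - cdf0 F₀ a₀) * ((y - μ a w) / g a w + thetaMu Q₀ μ a - gammaMu F₀ Q₀ μ)
    + (∫ u, (indLe a₀ u - cdf0 F₀ a₀) * μ u w ∂F₀) - OmegaMu F₀ Q₀ μ a₀

/-- The efficient influence function `D*_{a₀}(y,a,w)`. -/
noncomputable def Dstar {𝒲 : Type*} [MeasurableSpace 𝒲] (F₀ : Measure ℝ) (Q₀ : Measure 𝒲)
    (μ₀ g₀ : ℝ → 𝒲 → ℝ) (a₀ y a : ℝ) (w : 𝒲) : ℝ :=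
  (indLe a₀ a - cdf0 F₀ a₀) *
      ((y - μ₀ a w) / g₀ a w + thetaMu Q₀ μ₀ a - gammaMu F₀ Q₀ μ₀)
    + (∫ u, (indLe a₀ u - cdf0 F₀ a₀) * μ₀ u w ∂F₀) - 2 * OmegaMu F₀ Q₀ μ₀ a₀

/-!
Write `h a = 1{a ≤ a₀} - F₀(a₀)`; it has `F₀`-mean zero, so the `θ_μ - γ_μ` term and the
`w`-marginal term of `D` each integrate to `Ω_μ(a₀)`, and `E[D] = E[h(A) (Y - μ(A,W)) / g(A,W)]
+ Ω_μ(a₀)`. The tower property replaces `Y` by `μ₀(A,W)`, and the density `g₀` of `(A,W)` with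
respect to `F₀ ⊗ Q₀` turns the remaining expectation into `∬ g₀ h (μ₀ - μ) / g`. The identity
is then the pointwise algebra `h (μ - μ₀) (1 - g₀/g) = h μ - h μ₀ - g₀ h (μ - μ₀) / g`.
-/

lemma abs_integral_le_of_abs_le {α : Type*} [MeasurableSpace α] {ν : Measure α}
    [IsProbabilityMeasure ν] {f : α → ℝ} {C : ℝ} (hf : ∀ x, |f x| ≤ C) :
    |∫ x, f x ∂ν| ≤ C := by
  simpa using norm_integral_le_of_norm_le_const (μ := ν)
    (Eventually.of_forall fun x => (Real.norm_eq_abs (f x)).trans_le (hf x))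

lemma Measurable.integrable_of_abs_le {α : Type*} [MeasurableSpace α] {ν : Measure α}
    [IsFiniteMeasure ν] {f : α → ℝ} (hf : Measurable f) {C : ℝ} (hC : ∀ x, |f x| ≤ C) :
    Integrable f ν :=
  .of_bound hf.aestronglyMeasurable C (Eventually.of_forall hC)

lemma measurable_thetaMu {𝒲 : Type*} [MeasurableSpace 𝒲] {Q₀ : Measure 𝒲} [SFinite Q₀]
    {μ : ℝ → 𝒲 → ℝ} (hμm : Measurable (Function.uncurry μ)) : Measurable (thetaMu Q₀ μ) :=
  hμm.stronglyMeasurable.integral_prod_right'.measurable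

section CenteredIndicator

variable {F₀ : Measure ℝ} (a₀ : ℝ)

lemma indLe_eq_indicator : indLe a₀ = (Iic a₀).indicator 1 := by
  ext a
  simp [indLe, indicator_apply]

lemma measurable_indLe : Measurable (indLe a₀) := by
  rw [indLe_eq_indicator]
  exact measurable_one.indicator measurableSet_Iic

variable [IsProbabilityMeasure F₀]

lemma abs_indLe_sub_cdf0_le_one (a : ℝ) : |indLe a₀ a - cdf0 F₀ a₀| ≤ 1 := by
  have h0 : 0 ≤ cdf0 F₀ a₀ := ENNReal.toReal_nonneg
  have h1 : cdf0 F₀ a₀ ≤ 1 := measureReal_le_one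
  rw [abs_le]
  unfold indLe
  split <;> constructor <;> linarith

lemma abs_indLe_sub_cdf0_mul_le {x C : ℝ} (hx : |x| ≤ C) (a : ℝ) :
    |(indLe a₀ a - cdf0 F₀ a₀) * x| ≤ C := by
  rw [abs_mul]
  nlinarith [abs_indLe_sub_cdf0_le_one (F₀ := F₀) a₀ a, abs_nonneg x,
    abs_nonneg (indLe a₀ a - cdf0 F₀ a₀)]

lemma abs_indLe_sub_cdf0_div_le {K x : ℝ} (hK : 0 < K) (hx : K ≤ x) (a : ℝ) :
    |(indLe a₀ a - cdf0 F₀ a₀) / x| ≤ 1 / K := by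
  rw [abs_div, abs_of_pos (hK.trans_le hx)]
  exact div_le_div₀ zero_le_one (abs_indLe_sub_cdf0_le_one a₀ a) hK hx

lemma integrable_indLe_sub_cdf0 : Integrable (fun a => indLe a₀ a - cdf0 F₀ a₀) F₀ :=
  ((measurable_indLe a₀).sub_const _).integrable_of_abs_le (abs_indLe_sub_cdf0_le_one a₀)

lemma abs_indLe_sub_cdf0_div_mul_le {K x y C : ℝ} (hK : 0 < K) (hx : K ≤ x) (hy : |y| ≤ C)
    (a : ℝ) : |(indLe a₀ a - cdf0 F₀ a₀) / x * y| ≤ 1 / K * C :=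
  (abs_mul _ _).trans_le <| mul_le_mul (abs_indLe_sub_cdf0_div_le a₀ hK hx a) hy
    (abs_nonneg _) (one_div_pos.2 hK).le

lemma integral_indLe_sub_cdf0 : ∫ a, (indLe a₀ a - cdf0 F₀ a₀) ∂F₀ = 0 := by
  have hind : Integrable (indLe a₀) F₀ := by
    rw [indLe_eq_indicator]
    exact (integrable_const 1).indicator measurableSet_Iic
  rw [integral_sub hind (integrable_const _), indLe_eq_indicator,
    integral_indicator_one measurableSet_Iic]
  simp [cdf0, measureReal_def]

end CenteredIndicator

section Marginals

variable {𝒲 : Type*} [MeasurableSpace 𝒲] {F₀ : Measure ℝ} [IsProbabilityMeasure F₀]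
  {Q₀ : Measure 𝒲} [IsProbabilityMeasure Q₀] {μ : ℝ → 𝒲 → ℝ} {C : ℝ}

lemma integrable_indLe_sub_cdf0_mul_prod (hμm : Measurable (Function.uncurry μ))
    (hC : ∀ a w, |μ a w| ≤ C) (a₀ : ℝ) :
    Integrable (fun q : ℝ × 𝒲 => (indLe a₀ q.1 - cdf0 F₀ a₀) * μ q.1 q.2) (F₀.prod Q₀) :=
  (((measurable_indLe a₀).comp measurable_fst).sub_const _ |>.mul hμm).integrable_of_abs_le
    fun q => abs_indLe_sub_cdf0_mul_le a₀ (hC q.1 q.2) q.1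

lemma OmegaMu_eq_integral_prod (hμm : Measurable (Function.uncurry μ))
    (hC : ∀ a w, |μ a w| ≤ C) (a₀ : ℝ) :
    OmegaMu F₀ Q₀ μ a₀ = ∫ q, (indLe a₀ q.1 - cdf0 F₀ a₀) * μ q.1 q.2 ∂(F₀.prod Q₀) :=
  integral_integral (integrable_indLe_sub_cdf0_mul_prod hμm hC a₀)

lemma integral_integral_swap_eq_OmegaMu (hμm : Measurable (Function.uncurry μ))
    (hC : ∀ a w, |μ a w| ≤ C) (a₀ : ℝ) :
    ∫ w, ∫ u, (indLe a₀ u - cdf0 F₀ a₀) * μ u w ∂F₀ ∂Q₀ = OmegaMu F₀ Q₀ μ a₀ :=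
  (integral_integral_swap (integrable_indLe_sub_cdf0_mul_prod hμm hC a₀)).symm

lemma abs_thetaMu_sub_gammaMu_le (hC : ∀ a w, |μ a w| ≤ C) (a : ℝ) :
    |thetaMu Q₀ μ a - gammaMu F₀ Q₀ μ| ≤ C + C :=
  (abs_sub _ _).trans (add_le_add (abs_integral_le_of_abs_le (hC a))
    (abs_integral_le_of_abs_le fun a => abs_integral_le_of_abs_le (hC a)))

lemma integral_indLe_sub_cdf0_mul_thetaMu_sub_gammaMu (hμm : Measurable (Function.uncurry μ))
    (hC : ∀ a w, |μ a w| ≤ C) (a₀ : ℝ) :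
    ∫ a, (indLe a₀ a - cdf0 F₀ a₀) * (thetaMu Q₀ μ a - gammaMu F₀ Q₀ μ) ∂F₀
      = OmegaMu F₀ Q₀ μ a₀ := by
  have hint : Integrable (fun a => (indLe a₀ a - cdf0 F₀ a₀) * thetaMu Q₀ μ a) F₀ :=
    ((measurable_indLe a₀).sub_const _ |>.mul (measurable_thetaMu hμm)).integrable_of_abs_le
      fun a => abs_indLe_sub_cdf0_mul_le a₀ (abs_integral_le_of_abs_le (hC a)) a
  simp_rw [mul_sub]
  rw [integral_sub hint ((integrable_indLe_sub_cdf0 a₀).mul_const _), integral_mul_const,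
    integral_indLe_sub_cdf0, OmegaMu]
  simp [thetaMu, integral_const_mul]

end Marginals

lemma integral_integral_remainder_eq {𝒲 : Type*} [MeasurableSpace 𝒲] {F₀ : Measure ℝ}
    [IsProbabilityMeasure F₀] {Q₀ : Measure 𝒲} [IsProbabilityMeasure Q₀]
    {μ μ₀ g g₀ : ℝ → 𝒲 → ℝ} (hμm : Measurable (Function.uncurry μ)) {C : ℝ}
    (hC : ∀ a w, |μ a w| ≤ C) (hμ₀m : Measurable (Function.uncurry μ₀)) {C₀ : ℝ}
    (hC₀ : ∀ a w, |μ₀ a w| ≤ C₀) (hg : ∀ a w, g a w ≠ 0) (a₀ : ℝ)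
    (hint : Integrable (fun q : ℝ × 𝒲 => g₀ q.1 q.2 *
      ((indLe a₀ q.1 - cdf0 F₀ a₀) / g q.1 q.2 * (μ q.1 q.2 - μ₀ q.1 q.2))) (F₀.prod Q₀)) :
    ∫ a, ∫ w, (indLe a₀ a - cdf0 F₀ a₀) * (μ a w - μ₀ a w) * (1 - g₀ a w / g a w) ∂Q₀ ∂F₀
      = OmegaMu F₀ Q₀ μ a₀ - OmegaMu F₀ Q₀ μ₀ a₀
        - ∫ q, g₀ q.1 q.2 * ((indLe a₀ q.1 - cdf0 F₀ a₀) / g q.1 q.2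
            * (μ q.1 q.2 - μ₀ q.1 q.2)) ∂(F₀.prod Q₀) := by
  have hpt : ∀ a w, (indLe a₀ a - cdf0 F₀ a₀) * (μ a w - μ₀ a w) * (1 - g₀ a w / g a w)
      = (indLe a₀ a - cdf0 F₀ a₀) * μ a w - (indLe a₀ a - cdf0 F₀ a₀) * μ₀ a w
        - g₀ a w * ((indLe a₀ a - cdf0 F₀ a₀) / g a w * (μ a w - μ₀ a w)) := by
    intro a w
    field_simp [hg a w]
  have hint₁ := integrable_indLe_sub_cdf0_mul_prod (F₀ := F₀) (Q₀ := Q₀) hμm hC a₀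
  have hint₀ := integrable_indLe_sub_cdf0_mul_prod (F₀ := F₀) (Q₀ := Q₀) hμ₀m hC₀ a₀
  simp_rw [hpt]
  rw [OmegaMu_eq_integral_prod hμm hC, OmegaMu_eq_integral_prod hμ₀m hC₀,
    ← integral_sub hint₁ hint₀]
  exact (integral_integral ((hint₁.sub hint₀).sub hint)).trans
    (integral_sub (hint₁.sub hint₀) hint)

section Density

variable {Ω β : Type*} [MeasurableSpace Ω] [MeasurableSpace β] {P : Measure Ω} {T : Ω → β}
  {ν : Measure β} {ρ : β → ℝ} {Φ : β → ℝ}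

lemma integral_comp_eq_integral_density_mul (hT : Measurable T) (hρm : Measurable ρ)
    (hρ : 0 ≤ᵐ[ν] ρ) (hmap : P.map T = ν.withDensity fun x => ENNReal.ofReal (ρ x))
    (hΦ : Measurable Φ) :
    ∫ ω, Φ (T ω) ∂P = ∫ x, ρ x * Φ x ∂ν := by
  rw [← integral_map hT.aemeasurable hΦ.aestronglyMeasurable, hmap,
    integral_withDensity_eq_integral_toReal_smul hρm.ennreal_ofReal
      (Eventually.of_forall fun _ => ENNReal.ofReal_lt_top)]
  refine integral_congr_ae (hρ.mono fun x hx => ?_)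
  simp [ENNReal.toReal_ofReal hx]

lemma integrable_density_mul [IsFiniteMeasure P] (hρm : Measurable ρ) (hρ : 0 ≤ᵐ[ν] ρ)
    (hmap : P.map T = ν.withDensity fun x => ENNReal.ofReal (ρ x)) (hΦ : Measurable Φ)
    {C : ℝ} (hΦb : ∀ x, |Φ x| ≤ C) :
    Integrable (fun x => ρ x * Φ x) ν := by
  have hint : Integrable Φ (P.map T) := hΦ.integrable_of_abs_le hΦb
  rw [hmap, integrable_withDensity_iff hρm.ennreal_ofReal
    (Eventually.of_forall fun _ => ENNReal.ofReal_lt_top)] at hint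
  refine hint.congr (hρ.mono fun x hx => ?_)
  simp [ENNReal.toReal_ofReal hx, mul_comm]

end Density

lemma integral_comp_mul_eq_of_condExp_eq {Ω β : Type*} [MeasurableSpace Ω] [MeasurableSpace β]
    {P : Measure Ω} [IsFiniteMeasure P] {T : Ω → β} (hT : Measurable T) {Y : Ω → ℝ}
    (hY : Integrable Y P) {f : β → ℝ}
    (hcond : P[Y | MeasurableSpace.comap T inferInstance] =ᵐ[P] fun ω => f (T ω))
    {ψ : β → ℝ} (hψ : Measurable ψ) {c : ℝ} (hψb : ∀ x, |ψ x| ≤ c) :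
    ∫ ω, ψ (T ω) * Y ω ∂P = ∫ ω, ψ (T ω) * f (T ω) ∂P := by
  have hψT : StronglyMeasurable[MeasurableSpace.comap T inferInstance] fun ω => ψ (T ω) :=
    (hψ.comp (Measurable.of_comap_le le_rfl)).stronglyMeasurable
  have hint : Integrable (fun ω => ψ (T ω) * Y ω) P :=
    hY.bdd_mul (hψ.comp hT).aestronglyMeasurable
      (Eventually.of_forall fun ω => (Real.norm_eq_abs _).trans_le (hψb (T ω)))
  calc ∫ ω, ψ (T ω) * Y ω ∂P
      = ∫ ω, P[(fun ω => ψ (T ω)) * Y | MeasurableSpace.comap T inferInstance] ω ∂P :=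
        (integral_condExp hT.comap_le).symm
    _ = ∫ ω, ψ (T ω) * P[Y | MeasurableSpace.comap T inferInstance] ω ∂P :=
        integral_congr_ae (condExp_mul_of_stronglyMeasurable_left hψT hint hY)
    _ = ∫ ω, ψ (T ω) * f (T ω) ∂P := integral_congr_ae (hcond.mono fun ω hω => by simp [hω])

lemma integral_Dfun_eq {Ωs 𝒲 : Type*} [MeasurableSpace Ωs] [MeasurableSpace 𝒲]
    {P : Measure Ωs} [IsProbabilityMeasure P] {Y A : Ωs → ℝ} {W : Ωs → 𝒲}
    (hY : Integrable Y P) (hA : Measurable A) (hW : Measurable W)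
    {F₀ : Measure ℝ} [IsProbabilityMeasure F₀] {Q₀ : Measure 𝒲} [IsProbabilityMeasure Q₀]
    (hAlaw : P.map A = F₀) (hWlaw : P.map W = Q₀)
    {μ g : ℝ → 𝒲 → ℝ} (hμm : Measurable (Function.uncurry μ)) {C : ℝ}
    (hC : ∀ a w, |μ a w| ≤ C) (hgm : Measurable (Function.uncurry g)) {K₁ : ℝ} (hK₁ : 0 < K₁)
    (hg : ∀ a w, K₁ ≤ g a w) (a₀ : ℝ) :
    ∫ ω, Dfun F₀ Q₀ μ g a₀ (Y ω) (A ω) (W ω) ∂P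
      = ∫ ω, (indLe a₀ (A ω) - cdf0 F₀ a₀) / g (A ω) (W ω) * Y ω ∂P
        - ∫ ω, (indLe a₀ (A ω) - cdf0 F₀ a₀) / g (A ω) (W ω) * μ (A ω) (W ω) ∂P
        + OmegaMu F₀ Q₀ μ a₀ := by
  set ψ : Ωs → ℝ := fun ω => (indLe a₀ (A ω) - cdf0 F₀ a₀) / g (A ω) (W ω)
  set t : ℝ → ℝ := fun a => (indLe a₀ a - cdf0 F₀ a₀) * (thetaMu Q₀ μ a - gammaMu F₀ Q₀ μ)
  set φ : 𝒲 → ℝ := fun w => ∫ u, (indLe a₀ u - cdf0 F₀ a₀) * μ u w ∂F₀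
  have hψm : Measurable ψ :=
    (((measurable_indLe a₀).sub_const _).comp hA).div (hgm.comp (hA.prodMk hW))
  have hψb : ∀ ω, |ψ ω| ≤ 1 / K₁ := fun ω => abs_indLe_sub_cdf0_div_le a₀ hK₁ (hg _ _) _
  have htm : Measurable t :=
    ((measurable_indLe a₀).sub_const _).mul ((measurable_thetaMu hμm).sub_const _)
  have hφm : Measurable φ :=
    (((measurable_indLe a₀).comp measurable_fst).sub_const _ |>.mul
      hμm).stronglyMeasurable.integral_prod_left'.measurable
  have hint_ψY : Integrable (fun ω => ψ ω * Y ω) P :=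
    hY.bdd_mul hψm.aestronglyMeasurable
      (Eventually.of_forall fun ω => (Real.norm_eq_abs _).trans_le (hψb ω))
  have hint_ψμ : Integrable (fun ω => ψ ω * μ (A ω) (W ω)) P :=
    (hψm.mul (hμm.comp (hA.prodMk hW))).integrable_of_abs_le fun ω =>
      abs_indLe_sub_cdf0_div_mul_le a₀ hK₁ (hg _ _) (hC _ _) _
  have hint_t : Integrable (fun ω => t (A ω)) P :=
    (htm.comp hA).integrable_of_abs_le fun ω =>
      abs_indLe_sub_cdf0_mul_le a₀ (abs_thetaMu_sub_gammaMu_le hC _) _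
  have hint_φ : Integrable (fun ω => φ (W ω)) P :=
    (hφm.comp hW).integrable_of_abs_le fun ω =>
      abs_integral_le_of_abs_le fun u => abs_indLe_sub_cdf0_mul_le a₀ (hC u (W ω)) u
  have ht : ∫ ω, t (A ω) ∂P = OmegaMu F₀ Q₀ μ a₀ := by
    rw [← integral_map hA.aemeasurable htm.aestronglyMeasurable, hAlaw]
    exact integral_indLe_sub_cdf0_mul_thetaMu_sub_gammaMu hμm hC a₀
  have hφ : ∫ ω, φ (W ω) ∂P = OmegaMu F₀ Q₀ μ a₀ := by
    rw [← integral_map hW.aemeasurable hφm.aestronglyMeasurable, hWlaw]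
    exact integral_integral_swap_eq_OmegaMu hμm hC a₀
  have hpt : (fun ω => Dfun F₀ Q₀ μ g a₀ (Y ω) (A ω) (W ω)) = fun ω =>
      ψ ω * Y ω - ψ ω * μ (A ω) (W ω) + t (A ω) + φ (W ω) - OmegaMu F₀ Q₀ μ a₀ := by
    ext ω
    simp only [Dfun, ψ, t, φ]
    ring
  have hint₁ := hint_ψY.sub' hint_ψμ
  have hint₂ := hint₁.fun_add hint_t
  rw [hpt, integral_sub (hint₂.fun_add hint_φ) (integrable_const _), integral_add hint₂ hint_φ,
    integral_add hint₁ hint_t, integral_sub hint_ψY hint_ψμ, ht, hφ, integral_const]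
  simp only [probReal_univ, smul_eq_mul, one_mul, ψ]
  ring

theorem second_order_remainder_identity_general
    {Ωs 𝒲 : Type*} [MeasurableSpace Ωs] [MeasurableSpace 𝒲]
    (P : Measure Ωs) [IsProbabilityMeasure P]
    (Y A : Ωs → ℝ) (W : Ωs → 𝒲) (hY : Measurable Y) (hA : Measurable A) (hW : Measurable W)
    (hY2 : Integrable (fun ω => Y ω ^ 2) P)
    (F₀ : Measure ℝ) [IsProbabilityMeasure F₀] (Q₀ : Measure 𝒲) [IsProbabilityMeasure Q₀]
    (hAlaw : Measure.map A P = F₀) (hWlaw : Measure.map W P = Q₀)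
    (K₀ K₁ K₂ : ℝ) (hK₁ : 0 < K₁)
    (g₀ : ℝ → 𝒲 → ℝ) (hg₀m : Measurable (Function.uncurry g₀))
    (hjoint : Measure.map (fun ω => (A ω, W ω)) P
      = (F₀.prod Q₀).withDensity (fun q => ENNReal.ofReal (g₀ q.1 q.2)))
    (hg₀bd : ∀ᵐ q ∂(F₀.prod Q₀), K₁ ≤ g₀ q.1 q.2 ∧ g₀ q.1 q.2 ≤ K₂)
    (μ₀ : ℝ → 𝒲 → ℝ) (hμ₀m : Measurable (Function.uncurry μ₀))
    (hμ₀bd : ∀ a w, |μ₀ a w| ≤ K₀)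
    (hcond : MeasureTheory.condExp
        (MeasurableSpace.comap (fun ω => (A ω, W ω)) inferInstance) P Y
      =ᵐ[P] fun ω => μ₀ (A ω) (W ω))
    (a₀ : ℝ) (μ : ℝ → 𝒲 → ℝ) (hμm : Measurable (Function.uncurry μ))
    (hμbd : ∃ C : ℝ, ∀ a w, |μ a w| ≤ C)
    (g : ℝ → 𝒲 → ℝ) (hgm : Measurable (Function.uncurry g))
    (hg : ∀ a w, K₁ ≤ g a w) :
    ∫ ω, Dfun F₀ Q₀ μ g a₀ (Y ω) (A ω) (W ω) ∂P
      = OmegaMu F₀ Q₀ μ₀ a₀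
        + ∫ a, ∫ w, (indLe a₀ a - cdf0 F₀ a₀) * (μ a w - μ₀ a w)
            * (1 - g₀ a w / g a w) ∂Q₀ ∂F₀ := by
  obtain ⟨C, hC⟩ := hμbd
  have hYint : Integrable Y P :=
    ((memLp_two_iff_integrable_sq hY.aestronglyMeasurable).2 hY2).integrable one_le_two
  have hT : Measurable fun ω => (A ω, W ω) := hA.prodMk hW
  have hg₀ : 0 ≤ᵐ[F₀.prod Q₀] Function.uncurry g₀ := hg₀bd.mono fun q hq => hK₁.le.trans hq.1
  set ψ : ℝ × 𝒲 → ℝ := fun q => (indLe a₀ q.1 - cdf0 F₀ a₀) / g q.1 q.2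
  have hψm : Measurable ψ := (((measurable_indLe a₀).sub_const _).comp measurable_fst).div hgm
  have hψb : ∀ q, |ψ q| ≤ 1 / K₁ := fun q => abs_indLe_sub_cdf0_div_le a₀ hK₁ (hg _ _) _
  set Φ : ℝ × 𝒲 → ℝ := fun q => ψ q * (μ q.1 q.2 - μ₀ q.1 q.2)
  have hΦm : Measurable Φ := hψm.mul (hμm.sub hμ₀m)
  have hΦb : ∀ q, |Φ q| ≤ 1 / K₁ * (C + K₀) := fun q => abs_indLe_sub_cdf0_div_mul_le a₀ hK₁
    (hg _ _) ((abs_sub _ _).trans (add_le_add (hC _ _) (hμ₀bd _ _))) _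
  have hΦ_split : ∫ ω, Φ (A ω, W ω) ∂P
      = ∫ ω, ψ (A ω, W ω) * μ (A ω) (W ω) ∂P - ∫ ω, ψ (A ω, W ω) * μ₀ (A ω) (W ω) ∂P := by
    simp only [Φ, mul_sub]
    exact integral_sub
      ((hψm.comp hT).mul (hμm.comp hT) |>.integrable_of_abs_le fun ω =>
        abs_indLe_sub_cdf0_div_mul_le a₀ hK₁ (hg _ _) (hC _ _) _)
      ((hψm.comp hT).mul (hμ₀m.comp hT) |>.integrable_of_abs_le fun ω =>
        abs_indLe_sub_cdf0_div_mul_le a₀ hK₁ (hg _ _) (hμ₀bd _ _) _)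
  have htower :=
    integral_comp_mul_eq_of_condExp_eq hT hYint (f := Function.uncurry μ₀) hcond hψm hψb
  have hcov := integral_comp_eq_integral_density_mul hT hg₀m hg₀ hjoint hΦm
  rw [integral_Dfun_eq hYint hA hW hAlaw hWlaw hμm hC hgm hK₁ hg a₀,
    integral_integral_remainder_eq hμm hC hμ₀m hμ₀bd (fun a w => (hK₁.trans_le (hg a w)).ne') a₀
      (integrable_density_mul hg₀m hg₀ hjoint hΦm hΦb)]
  simp only [Φ, ψ, Function.uncurry_def] at htower hcov hΦ_split ⊢
  linarith

/-- Second-order remainder identity for the influence-function construction. -/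
theorem second_order_remainder_identity
    {Ωs 𝒲 : Type*} [MeasurableSpace Ωs] [MeasurableSpace 𝒲]
    (P : Measure Ωs) [IsProbabilityMeasure P]
    (Y A : Ωs → ℝ) (W : Ωs → 𝒲) (hY : Measurable Y) (hA : Measurable A) (hW : Measurable W)
    (hY2 : Integrable (fun ω => Y ω ^ 2) P)
    (F₀ : Measure ℝ) [IsProbabilityMeasure F₀] (Q₀ : Measure 𝒲) [IsProbabilityMeasure Q₀]
    (hAlaw : Measure.map A P = F₀) (hWlaw : Measure.map W P = Q₀)
    (K₀ K₁ K₂ : ℝ) (hK₀ : 0 ≤ K₀) (hK₁ : 0 < K₁) (hK₁₂ : K₁ ≤ K₂)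
    (g₀ : ℝ → 𝒲 → ℝ) (hg₀m : Measurable (Function.uncurry g₀))
    (hjoint : Measure.map (fun ω => (A ω, W ω)) P
      = (F₀.prod Q₀).withDensity (fun q => ENNReal.ofReal (g₀ q.1 q.2)))
    (hg₀bd : ∀ᵐ q ∂(F₀.prod Q₀), K₁ ≤ g₀ q.1 q.2 ∧ g₀ q.1 q.2 ≤ K₂)
    (μ₀ : ℝ → 𝒲 → ℝ) (hμ₀m : Measurable (Function.uncurry μ₀))
    (hμ₀bd : ∀ a w, |μ₀ a w| ≤ K₀)
    (hcond : MeasureTheory.condExp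
        (MeasurableSpace.comap (fun ω => (A ω, W ω)) inferInstance) P Y
      =ᵐ[P] fun ω => μ₀ (A ω) (W ω))
    (a₀ : ℝ) (μ : ℝ → 𝒲 → ℝ) (hμm : Measurable (Function.uncurry μ))
    (hμbd : ∃ C : ℝ, ∀ a w, |μ a w| ≤ C)
    (g : ℝ → 𝒲 → ℝ) (hgm : Measurable (Function.uncurry g))
    (hg : ∀ a w, K₁ ≤ g a w) :
    ∫ ω, Dfun F₀ Q₀ μ g a₀ (Y ω) (A ω) (W ω) ∂P
      = OmegaMu F₀ Q₀ μ₀ a₀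
        + ∫ a, ∫ w, (indLe a₀ a - cdf0 F₀ a₀) * (μ a w - μ₀ a w)
            * (1 - g₀ a w / g a w) ∂Q₀ ∂F₀ :=
  second_order_remainder_identity_general P Y A W hY hA hW hY2 F₀ Q₀ hAlaw hWlaw K₀ K₁ K₂ hK₁ g₀
    hg₀m hjoint hg₀bd μ₀ hμ₀m hμ₀bd hcond a₀ μ hμm hμbd g hgm hg
end

section
/- Doubly-robust bound on the product remainder: Let (𝒳, 𝒢, P) be a probability space and let μ₀, μ_∞, μ', g₀, g_∞, g' : 𝒳 → ℝ be measurable functions square-integrable with respect to P. Suppose there exist measurable sets S₁, S₂, S₃ ⊆ 𝒳 with P(S₁ ∪ S₂ ∪ S₃) = 1 such that μ_∞ = μ₀ on S₁, g_∞ = g₀ on S₂, and both μ_∞ = μ₀ and g_∞ = g₀ on S₃. Then ∫ |μ' − μ₀|·|g' − g₀| dP ≤ ‖μ' − μ_∞‖_{L²(P)}·‖g' − g₀‖_{L²(P)} + ‖μ' − μ₀‖_{L²(P)}·‖g' − g_∞‖_{L²(P)} + ‖μ' − μ_∞‖_{L²(P)}·‖g' − g_∞‖_{L²(P)}. -/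
open MeasureTheory

/-! Wherever `μinf = μ₀`, the factor `|μ' - μ₀|` may be replaced by `|μ' - μinf|`, and wherever
`ginf = g₀`, the factor `|g' - g₀|` by `|g' - ginf|`. Since the three sets cover almost everything,
`|μ' - μ₀| * |g' - g₀|` is a.e. dominated by the sum of the three mixed products, and integrating
and applying Cauchy–Schwarz to each product gives the bound. -/

section

variable {α : Type*} [MeasurableSpace α] {P : Measure α}

theorem integral_abs_mul_abs_le_sqrt_mul_sqrt {a b : α → ℝ} (ha : MemLp a 2 P)
    (hb : MemLp b 2 P) :
    ∫ x, |a x| * |b x| ∂P ≤ √(∫ x, a x ^ 2 ∂P) * √(∫ x, b x ^ 2 ∂P) := by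
  have h := integral_mul_norm_le_Lp_mul_Lq Real.HolderConjugate.two_two
    (by simpa using ha) (by simpa using hb)
  simpa only [Real.norm_eq_abs, Real.rpow_two, sq_abs, ← Real.sqrt_eq_rpow] using h

theorem integrable_abs_mul_abs_of_memLp_two {a b : α → ℝ} (ha : MemLp a 2 P)
    (hb : MemLp b 2 P) :
    Integrable (fun x => |a x| * |b x|) P :=
  ha.abs.integrable_mul hb.abs

theorem abs_mul_abs_le_of_eq_or_eq {a a' b b' : ℝ} (h : a = a' ∨ b = b') :
    |a| * |b| ≤ |a'| * |b| + |a| * |b'| + |a'| * |b'| := by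
  rcases h with h | h <;> rw [h] <;>
    nlinarith [abs_nonneg a, abs_nonneg a', abs_nonneg b, abs_nonneg b']

theorem integral_abs_mul_abs_le_of_ae_eq_or_eq {a a' b b' : α → ℝ} (ha : MemLp a 2 P)
    (ha' : MemLp a' 2 P) (hb : MemLp b 2 P) (hb' : MemLp b' 2 P)
    (h : ∀ᵐ x ∂P, a x = a' x ∨ b x = b' x) :
    ∫ x, |a x| * |b x| ∂P
      ≤ √(∫ x, a' x ^ 2 ∂P) * √(∫ x, b x ^ 2 ∂P) + √(∫ x, a x ^ 2 ∂P) * √(∫ x, b' x ^ 2 ∂P)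
        + √(∫ x, a' x ^ 2 ∂P) * √(∫ x, b' x ^ 2 ∂P) := by
  have hab := integrable_abs_mul_abs_of_memLp_two ha' hb
  have hab' := integrable_abs_mul_abs_of_memLp_two ha hb'
  have ha'b' := integrable_abs_mul_abs_of_memLp_two ha' hb'
  calc ∫ x, |a x| * |b x| ∂P
      ≤ ∫ x, (|a' x| * |b x| + |a x| * |b' x| + |a' x| * |b' x|) ∂P :=
        integral_mono_ae (integrable_abs_mul_abs_of_memLp_two ha hb) ((hab.add hab').add ha'b')
          (h.mono fun _ => abs_mul_abs_le_of_eq_or_eq)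
    _ = ∫ x, |a' x| * |b x| ∂P + ∫ x, |a x| * |b' x| ∂P + ∫ x, |a' x| * |b' x| ∂P := by
        rw [integral_add ?_ ha'b', integral_add hab hab']
        exact hab.add hab'
    _ ≤ _ := by
        gcongr
        · exact integral_abs_mul_abs_le_sqrt_mul_sqrt ha' hb
        · exact integral_abs_mul_abs_le_sqrt_mul_sqrt ha hb'
        · exact integral_abs_mul_abs_le_sqrt_mul_sqrt ha' hb'

end

theorem doubly_robust_product_remainder_bound_general
    {𝒳 : Type*} [MeasurableSpace 𝒳] (P : Measure 𝒳) [IsProbabilityMeasure P]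
    (μ₀ μinf μ' g₀ ginf g' : 𝒳 → ℝ)
    (hμ₀2 : MemLp μ₀ 2 P) (hμinf2 : MemLp μinf 2 P) (hμ'2 : MemLp μ' 2 P)
    (hg₀2 : MemLp g₀ 2 P) (hginf2 : MemLp ginf 2 P) (hg'2 : MemLp g' 2 P)
    (S₁ S₂ S₃ : Set 𝒳) (hS₁ : MeasurableSet S₁) (hS₂ : MeasurableSet S₂)
    (hS₃ : MeasurableSet S₃) (hcover : P (S₁ ∪ S₂ ∪ S₃) = 1)
    (h₁ : ∀ x ∈ S₁, μinf x = μ₀ x) (h₂ : ∀ x ∈ S₂, ginf x = g₀ x)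
    (h₃ : ∀ x ∈ S₃, μinf x = μ₀ x ∧ ginf x = g₀ x) :
    ∫ x, |μ' x - μ₀ x| * |g' x - g₀ x| ∂P
      ≤ Real.sqrt (∫ x, (μ' x - μinf x) ^ 2 ∂P) * Real.sqrt (∫ x, (g' x - g₀ x) ^ 2 ∂P)
        + Real.sqrt (∫ x, (μ' x - μ₀ x) ^ 2 ∂P) * Real.sqrt (∫ x, (g' x - ginf x) ^ 2 ∂P)
        + Real.sqrt (∫ x, (μ' x - μinf x) ^ 2 ∂P)
            * Real.sqrt (∫ x, (g' x - ginf x) ^ 2 ∂P) := by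
  have hcover_ae : ∀ᵐ x ∂P, x ∈ S₁ ∪ S₂ ∪ S₃ :=
    (mem_ae_iff_prob_eq_one ((hS₁.union hS₂).union hS₃)).2 hcover
  refine integral_abs_mul_abs_le_of_ae_eq_or_eq (hμ'2.sub hμ₀2) (hμ'2.sub hμinf2)
    (hg'2.sub hg₀2) (hg'2.sub hginf2) ?_
  filter_upwards [hcover_ae] with x hx
  rcases hx with (hx | hx) | hx
  · exact Or.inl (by rw [h₁ x hx])
  · exact Or.inr (by rw [h₂ x hx])
  · exact Or.inl (by rw [(h₃ x hx).1])

/-- Doubly-robust bound on the product remainder. -/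
theorem doubly_robust_product_remainder_bound
    {𝒳 : Type*} [MeasurableSpace 𝒳] (P : Measure 𝒳) [IsProbabilityMeasure P]
    (μ₀ μinf μ' g₀ ginf g' : 𝒳 → ℝ)
    (hμ₀ : Measurable μ₀) (hμinf : Measurable μinf) (hμ' : Measurable μ')
    (hg₀ : Measurable g₀) (hginf : Measurable ginf) (hg' : Measurable g')
    (hμ₀2 : MemLp μ₀ 2 P) (hμinf2 : MemLp μinf 2 P) (hμ'2 : MemLp μ' 2 P)
    (hg₀2 : MemLp g₀ 2 P) (hginf2 : MemLp ginf 2 P) (hg'2 : MemLp g' 2 P)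
    (S₁ S₂ S₃ : Set 𝒳) (hS₁ : MeasurableSet S₁) (hS₂ : MeasurableSet S₂)
    (hS₃ : MeasurableSet S₃) (hcover : P (S₁ ∪ S₂ ∪ S₃) = 1)
    (h₁ : ∀ x ∈ S₁, μinf x = μ₀ x) (h₂ : ∀ x ∈ S₂, ginf x = g₀ x)
    (h₃ : ∀ x ∈ S₃, μinf x = μ₀ x ∧ ginf x = g₀ x) :
    ∫ x, |μ' x - μ₀ x| * |g' x - g₀ x| ∂P
      ≤ Real.sqrt (∫ x, (μ' x - μinf x) ^ 2 ∂P) * Real.sqrt (∫ x, (g' x - g₀ x) ^ 2 ∂P)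
        + Real.sqrt (∫ x, (μ' x - μ₀ x) ^ 2 ∂P) * Real.sqrt (∫ x, (g' x - ginf x) ^ 2 ∂P)
        + Real.sqrt (∫ x, (μ' x - μinf x) ^ 2 ∂P)
            * Real.sqrt (∫ x, (g' x - ginf x) ^ 2 ∂P) :=
  doubly_robust_product_remainder_bound_general P μ₀ μinf μ' g₀ ginf g' hμ₀2 hμinf2 hμ'2 hg₀2 hginf2
    hg'2 S₁ S₂ S₃ hS₁ hS₂ hS₃ hcover h₁ h₂ h₃
end
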